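/- Let X be an irreducible birth-and-death chain on ⟦b,a⟧ with transition probabilities p_x, q_x and reversible invariant probability measure π. Then for all integers b ≤ j < n ≤ a: E[T_{j→n}] + E[T_{n→j}] = Σ_{k=j+1}^{n} 1 / ( q_k · π(k) ). -/

import Mathlib

open MeasureTheory Filter Topology ENNReal ProbabilityTheory

noncomputable section

/-- First time `t ≥ 0` at which the path `ω` visits the set `A`,
with value `⊤` if the path never visits `A`. -/
def hitTime {S : Type*} (A : Set S) (ω : ℕ → S) : ℝ≥0∞ :=
  ⨅ (t : ℕ) (_ : ω t ∈ A), (t : ℝ≥0∞)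

/-- First time `t > 0` at which the path `ω` visits the set `A`. -/
def hitTimePos {S : Type*} (A : Set S) (ω : ℕ → S) : ℝ≥0∞ :=
  ⨅ (t : ℕ) (_ : 0 < t) (_ : ω t ∈ A), (t : ℝ≥0∞)

/-- First time `t ≥ r` at which the path `ω` visits the set `A`. -/
def hitTimeAfter {S : Type*} (A : Set S) (r : ℝ≥0∞) (ω : ℕ → S) : ℝ≥0∞ :=
  ⨅ (t : ℕ) (_ : r ≤ (t : ℝ≥0∞)) (_ : ω t ∈ A), (t : ℝ≥0∞)

/-- One-step transition probabilities of a birth-and-death chain on `ℤ` with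
birth rates `p` and death rates `q` (and holding probability `1 - p x - q x`). -/
def bdStep (p q : ℤ → ℝ) (x y : ℤ) : ℝ :=
  if y = x + 1 then p x else if y = x - 1 then q x
  else if y = x then 1 - p x - q x else 0

/-- An irreducible discrete-time birth-and-death chain on the integer interval
`⟦b,a⟧`, given by its transition probabilities `p x = p(x,x+1) > 0` (for `b ≤ x ≤ a-1`),
`q x = p(x,x-1) > 0` (for `b+1 ≤ x ≤ a`), and by the laws `law x` of the chain started
at `x` on path space `ℕ → ℤ` (characterized by the cylinder/Markov property `markov`). -/
structure BDChain (b a : ℤ) where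
  p : ℤ → ℝ
  q : ℤ → ℝ
  law : ℤ → Measure (ℕ → ℤ)
  prob : ∀ x, IsProbabilityMeasure (law x)
  p_pos : ∀ x, b ≤ x → x ≤ a - 1 → 0 < p x
  q_pos : ∀ x, b + 1 ≤ x → x ≤ a → 0 < q x
  p_zero : ∀ x, x < b ∨ a ≤ x → p x = 0
  q_zero : ∀ x, x ≤ b ∨ a < x → q x = 0
  r_nonneg : ∀ x, b ≤ x → x ≤ a → p x + q x ≤ 1
  init : ∀ x, law x {ω | ω 0 = x} = 1
  markov : ∀ (x : ℤ) (u : ℕ → ℤ) (n : ℕ),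
    law x {ω | ∀ i ≤ n + 1, ω i = u i}
      = law x {ω | ∀ i ≤ n, ω i = u i} * ENNReal.ofReal (bdStep p q (u n) (u (n + 1)))

/-- Mean hitting time `E[T_{x → y}]` for the birth-and-death chain `c`. -/
def BDChain.eT {b a : ℤ} (c : BDChain b a) (x y : ℤ) : ℝ≥0∞ :=
  ∫⁻ ω, hitTime {y} ω ∂(c.law x)

/-- Mean hitting time `E[T_{x → A}]` of a set `A` for the birth-and-death chain `c`. -/
def BDChain.eTset {b a : ℤ} (c : BDChain b a) (x : ℤ) (A : Set ℤ) : ℝ≥0∞ :=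
  ∫⁻ ω, hitTime A ω ∂(c.law x)

/-- Second moment `E[T_{x → y}²]` of the hitting time. -/
def BDChain.eT2 {b a : ℤ} (c : BDChain b a) (x y : ℤ) : ℝ≥0∞ :=
  ∫⁻ ω, (hitTime {y} ω) ^ 2 ∂(c.law x)

/-- `π` is the (unique) reversible invariant probability measure of the
birth-and-death chain `c` on `⟦b,a⟧`: it is positive on `⟦b,a⟧`, vanishes outside,
has total mass one, and satisfies the reversibility (detailed balance) relation
`π(x) q_x = π(x-1) p_{x-1}`. -/
def BDChain.IsStationary {b a : ℤ} (c : BDChain b a) (π : ℤ → ℝ) : Prop :=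
  (∀ x, b ≤ x → x ≤ a → 0 < π x) ∧ (∀ x, x < b ∨ a < x → π x = 0) ∧
  (∑ x ∈ Finset.Icc b a, π x) = 1 ∧
  (∀ x, b + 1 ≤ x → x ≤ a → π x * c.q x = π (x - 1) * c.p (x - 1))

/-!
Summing the tail probabilities `P(T > t)` turns `E[T_{x→A}]` into the minimal solution of
the first-step equations `h = 1 + K h` off `A`, `h = 0` on `A`; on a finite set that the chain
cannot leave before hitting `A`, any bounded solution is therefore the mean hitting time.
For the birth-and-death chain, `E[T_{x→n}] = Σ_{x ≤ k < n} π⟦b,k⟧ / (π_k p_k)` solves these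
equations on `⟦b,n⟧`, because detailed balance makes `π_k p_k = π_{k+1} q_{k+1}` the flow across
the edge `{k, k+1}`; reflecting `x ↦ -x` gives `E[T_{n→j}] = Σ_{j < k ≤ n} π⟦k,a⟧ / (π_k q_k)`.
In the sum of the two, the `k`-th terms combine to
`(π⟦b,k-1⟧ + π⟦k,a⟧) / (π_k q_k) = 1 / (π_k q_k)`.
-/

section Survival

variable {S : Type*} (K : S → S → ℝ≥0∞) (A : Set S)

def survivalProb : ℕ → S → ℝ≥0∞
  | 0 => Aᶜ.indicator 1
  | t + 1 => Aᶜ.indicator fun x => ∑' y, K x y * survivalProb t y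

def meanHittingTime (x : S) : ℝ≥0∞ := ∑' t, survivalProb K A t x

variable {K A}

lemma survivalProb_of_mem {x : S} (hx : x ∈ A) (t : ℕ) : survivalProb K A t x = 0 := by
  cases t <;> simp [survivalProb, hx]

lemma survivalProb_zero_of_notMem {x : S} (hx : x ∉ A) : survivalProb K A 0 x = 1 := by
  simp [survivalProb, hx]

lemma survivalProb_succ_of_notMem {x : S} (hx : x ∉ A) (t : ℕ) :
    survivalProb K A (t + 1) x = ∑' y, K x y * survivalProb K A t y := by
  simp [survivalProb, hx]

lemma meanHittingTime_of_notMem {x : S} (hx : x ∉ A) :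
    meanHittingTime K A x = 1 + ∑' y, K x y * meanHittingTime K A y := by
  simp only [meanHittingTime, ← ENNReal.tsum_mul_left]
  rw [tsum_eq_zero_add' ENNReal.summable, survivalProb_zero_of_notMem hx,
    tsum_congr (survivalProb_succ_of_notMem hx), ENNReal.tsum_comm]

lemma survivalProb_comp_equiv {S' : Type*} (e : S' ≃ S) (t : ℕ) (x : S') :
    survivalProb (fun x y => K (e x) (e y)) (e ⁻¹' A) t x = survivalProb K A t (e x) := by
  induction t generalizing x with
  | zero => rfl
  | succ t ih =>
    simp only [survivalProb, Set.indicator, Set.mem_compl_iff, Set.mem_preimage, ih]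
    congr 1
    exact e.tsum_eq fun y => K (e x) y * survivalProb K A t y

lemma meanHittingTime_comp_equiv {S' : Type*} (e : S' ≃ S) (x : S') :
    meanHittingTime (fun x y => K (e x) (e y)) (e ⁻¹' A) x = meanHittingTime K A (e x) := by
  simp only [meanHittingTime, survivalProb_comp_equiv]

end Survival

section Comparison

variable {S : Type*} {K : S → S → ℝ≥0∞} {A I : Set S}

lemma tsum_mul_le_tsum_mul_of_closed (hI : ∀ x ∈ I, x ∉ A → ∀ y, K x y ≠ 0 → y ∈ I)
    {f g : S → ℝ≥0∞} (hfg : ∀ y ∈ I, f y ≤ g y) {x : S} (hx : x ∈ I) (hxA : x ∉ A) :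
    ∑' y, K x y * f y ≤ ∑' y, K x y * g y := by
  refine ENNReal.tsum_le_tsum fun y => ?_
  by_cases hK : K x y = 0
  · simp [hK]
  · exact mul_le_mul_right (hfg y (hI x hx hxA y hK)) _

lemma meanHittingTime_le_of_supersolution (hI : ∀ x ∈ I, x ∉ A → ∀ y, K x y ≠ 0 → y ∈ I)
    {v : S → ℝ≥0∞} (hv : ∀ x ∈ I, x ∉ A → 1 + ∑' y, K x y * v y ≤ v x) :
    ∀ x ∈ I, meanHittingTime K A x ≤ v x := by
  have partial_le : ∀ m, ∀ x ∈ I, ∑ t ∈ Finset.range m, survivalProb K A t x ≤ v x := by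
    intro m
    induction m with
    | zero => simp
    | succ m ih =>
      intro x hx
      by_cases hxA : x ∈ A
      · simp [survivalProb_of_mem hxA]
      calc ∑ t ∈ Finset.range (m + 1), survivalProb K A t x
          = 1 + ∑' y, K x y * ∑ t ∈ Finset.range m, survivalProb K A t y := by
            simp only [Finset.sum_range_succ', survivalProb_zero_of_notMem hxA,
              survivalProb_succ_of_notMem hxA, Finset.mul_sum]
            rw [add_comm, Summable.tsum_finsetSum fun _ _ => ENNReal.summable]
        _ ≤ 1 + ∑' y, K x y * v y := by
          gcongr 1 + ?_
          exact tsum_mul_le_tsum_mul_of_closed hI ih hx hxA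
        _ ≤ v x := hv x hx hxA
  exact fun x hx => Summable.tsum_le_of_sum_range_le ENNReal.summable fun m => partial_le m x hx

lemma le_meanHittingTime_of_bounded_solution (hI : ∀ x ∈ I, x ∉ A → ∀ y, K x y ≠ 0 → y ∈ I)
    {v : S → ℝ≥0∞} {M : ℝ≥0∞} (hM : M ≠ ⊤) (hvM : ∀ x ∈ I, v x ≤ M)
    (hvA : ∀ x ∈ I, x ∈ A → v x = 0) (hv : ∀ x ∈ I, x ∉ A → v x = 1 + ∑' y, K x y * v y)
    {x : S} (hx : x ∈ I) (hfin : meanHittingTime K A x ≠ ⊤) :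
    v x ≤ meanHittingTime K A x := by
  -- `M * survivalProb K A m` bounds what the first `m` steps of the expansion of `v` miss
  have key : ∀ m, ∀ x ∈ I, v x ≤ meanHittingTime K A x + M * survivalProb K A m x := by
    intro m
    induction m with
    | zero =>
      intro x hx
      by_cases hxA : x ∈ A
      · simp [hvA x hx hxA]
      · rw [survivalProb_zero_of_notMem hxA, mul_one]
        exact (hvM x hx).trans le_add_self
    | succ m ih =>
      intro x hx
      by_cases hxA : x ∈ A
      · simp [hvA x hx hxA]
      calc v x = 1 + ∑' y, K x y * v y := hv x hx hxA
        _ ≤ 1 + ∑' y, K x y * (meanHittingTime K A y + M * survivalProb K A m y) := by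
          gcongr 1 + ?_
          exact tsum_mul_le_tsum_mul_of_closed hI ih hx hxA
        _ = meanHittingTime K A x + M * survivalProb K A (m + 1) x := by
          simp only [meanHittingTime_of_notMem hxA, survivalProb_succ_of_notMem hxA, mul_add,
            ENNReal.tsum_add, ← ENNReal.tsum_mul_left, add_assoc]
          congr 2
          exact tsum_congr fun y => by ring
  have hF : Tendsto (fun m => survivalProb K A m x) atTop (𝓝 0) :=
    ENNReal.tendsto_atTop_zero_of_tsum_ne_top hfin
  have hlim : Tendsto (fun m => meanHittingTime K A x + M * survivalProb K A m x) atTop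
      (𝓝 (meanHittingTime K A x)) := by
    simpa using tendsto_const_nhds.add (ENNReal.Tendsto.const_mul hF (Or.inr hM))
  exact ge_of_tendsto' hlim fun m => key m x hx

lemma meanHittingTime_eq_of_bounded_solution (hI : ∀ x ∈ I, x ∉ A → ∀ y, K x y ≠ 0 → y ∈ I)
    {v : S → ℝ≥0∞} {M : ℝ≥0∞} (hM : M ≠ ⊤) (hvM : ∀ x ∈ I, v x ≤ M)
    (hvA : ∀ x ∈ I, x ∈ A → v x = 0) (hv : ∀ x ∈ I, x ∉ A → v x = 1 + ∑' y, K x y * v y) :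
    ∀ x ∈ I, meanHittingTime K A x = v x := by
  have hle := meanHittingTime_le_of_supersolution hI fun x hx hxA => (hv x hx hxA).ge
  refine fun x hx => (hle x hx).antisymm ?_
  exact le_meanHittingTime_of_bounded_solution hI hM hvM hvA hv hx
    ((hle x hx).trans_lt ((hvM x hx).trans_lt hM.lt_top)).ne

end Comparison

section PathSpace

variable {S : Type*} {K : S → S → ℝ≥0∞}

/-- Probability that the chain started at `x` visits `v 0, …, v (t - 1)` at times `1, …, t`. -/
def pathProb (K : S → S → ℝ≥0∞) (x : S) {t : ℕ} (v : Fin t → S) : ℝ≥0∞ :=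
  ∏ i : Fin t,
    K ((Fin.cons x v : Fin (t + 1) → S) i.castSucc) ((Fin.cons x v : Fin (t + 1) → S) i.succ)

lemma pathProb_cons (x y : S) {t : ℕ} (w : Fin t → S) :
    pathProb K x (Fin.cons y w : Fin (t + 1) → S) = K x y * pathProb K y w := by
  simp [pathProb, Fin.prod_univ_succ]

lemma tsum_indicator_pathProb (A : Set S) (t : ℕ) (x : S) :
    ∑' v : Fin t → S, {v | ∀ i, (Fin.cons x v : Fin (t + 1) → S) i ∉ A}.indicator (pathProb K x) v
      = survivalProb K A t x := by
  classical
  induction t generalizing x with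
  | zero =>
    rw [tsum_fintype, Fintype.sum_unique]
    have hmem : (default : Fin 0 → S) ∈ {v | ∀ i, (Fin.cons x v : Fin 1 → S) i ∉ A} ↔ x ∈ Aᶜ := by
      simp [Fin.forall_fin_one]
    simp only [survivalProb, Set.indicator_apply, hmem]
    simp [pathProb]
  | succ t ih =>
    rw [← (Fin.consEquiv fun _ => S).tsum_eq, ENNReal.tsum_prod']
    by_cases hx : x ∈ A
    · simp [survivalProb_of_mem hx, Set.indicator, Fin.forall_fin_succ, hx]
    rw [survivalProb_succ_of_notMem hx]
    refine tsum_congr fun y => ?_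
    rw [← ih, ← ENNReal.tsum_mul_left]
    refine tsum_congr fun w => ?_
    have hmem : (Fin.cons y w : Fin (t + 1) → S) ∈ {v | ∀ i, (Fin.cons x v : Fin (t + 2) → S) i ∉ A}
        ↔ w ∈ {v | ∀ i, (Fin.cons y v : Fin (t + 1) → S) i ∉ A} := by
      simp [Fin.forall_fin_succ (n := t + 1), hx]
    change Set.indicator _ _ (Fin.cons y w : Fin (t + 1) → S) = _
    simp only [Set.indicator_apply, hmem, pathProb_cons, mul_ite, mul_zero]

def pathPrefix (t : ℕ) (ω : ℕ → S) : Fin (t + 1) → S := fun i => ω i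

def avoidUntil (A : Set S) (t : ℕ) : Set (ℕ → S) := {ω | ∀ s ≤ t, ω s ∉ A}

lemma avoidUntil_eq_preimage_pathPrefix (A : Set S) (t : ℕ) :
    avoidUntil A t = pathPrefix t ⁻¹' {u | ∀ i, u i ∉ A} := by
  ext ω
  simp [avoidUntil, pathPrefix, Fin.forall_iff]

lemma hitTime_eq_tsum_indicator_avoidUntil (A : Set S) (ω : ℕ → S) :
    hitTime A ω = ∑' t : ℕ, (avoidUntil A t).indicator 1 ω := by
  classical
  by_cases hA : ∃ s, ω s ∈ A
  · have hfind : hitTime A ω = Nat.find hA :=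
      le_antisymm (iInf₂_le (Nat.find hA) (Nat.find_spec hA))
        (le_iInf₂ fun s hs => by exact_mod_cast Nat.find_min' hA hs)
    have hlt : ∀ t, (∀ s ≤ t, ω s ∉ A) ↔ t < Nat.find hA := fun t => (Nat.lt_find_iff hA t).symm
    simp only [hfind, Set.indicator_apply, avoidUntil, Set.mem_ofPred_eq, hlt, Pi.one_apply]
    rw [tsum_eq_sum (s := Finset.range (Nat.find hA)) fun t ht => if_neg (by simpa using ht),
      Finset.sum_congr rfl fun t ht => if_pos (Finset.mem_range.mp ht)]
    simp
  · simp only [not_exists] at hA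
    have htop : hitTime A ω = ⊤ := by simp [hitTime, hA]
    simp [htop, avoidUntil, hA]

variable [MeasurableSpace S]

lemma measurable_pathPrefix (t : ℕ) : Measurable (pathPrefix (S := S) t) :=
  measurable_pi_lambda _ fun i => measurable_pi_apply (i : ℕ)

open Classical in
def IsMarkovChainLaw (K : S → S → ℝ≥0∞) (law : S → Measure (ℕ → S)) : Prop :=
  ∀ x (u : ℕ → S) (n : ℕ), law x {ω | ∀ i ≤ n, ω i = u i}
    = (if u 0 = x then 1 else 0) * ∏ i ∈ Finset.range n, K (u i) (u (i + 1))

variable {law : S → Measure (ℕ → S)}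

open Classical in
lemma IsMarkovChainLaw.measure_pathPrefix_eq (h : IsMarkovChainLaw K law) (x z : S) {t : ℕ}
    (v : Fin t → S) :
    law x (pathPrefix t ⁻¹' {Fin.cons z v}) = if z = x then pathProb K x v else 0 := by
  set path : Fin (t + 1) → S := Fin.cons z v
  let u : ℕ → S := fun i => if hi : i < t + 1 then path ⟨i, hi⟩ else z
  have hu : ∀ i (hi : i < t + 1), u i = path ⟨i, hi⟩ := fun i hi => dif_pos hi
  have hset : pathPrefix t ⁻¹' {path} = {ω | ∀ i ≤ t, ω i = u i} := by
    ext ω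
    simp only [pathPrefix, Set.mem_preimage, Set.mem_singleton_iff, funext_iff, Fin.forall_iff,
      Nat.lt_succ_iff]
    exact forall₂_congr fun i hi => by rw [hu i (by omega)]
  have hprod : ∏ i ∈ Finset.range t, K (u i) (u (i + 1)) = pathProb K z v := by
    rw [← Fin.prod_univ_eq_prod_range]
    refine Finset.prod_congr rfl fun i _ => ?_
    rw [hu i (by omega), hu (i + 1) (by omega)]
    rfl
  rw [hset, h x u t, hprod, show u 0 = z from hu 0 t.succ_pos]
  split_ifs with hzx
  · rw [hzx, one_mul]
  · rw [zero_mul]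

lemma IsMarkovChainLaw.measure_pathPrefix_preimage [MeasurableSingletonClass S] [Countable S]
    (h : IsMarkovChainLaw K law) (x : S) {t : ℕ} (P : Set (Fin (t + 1) → S)) :
    law x (pathPrefix t ⁻¹' P) =
      ∑' v : Fin t → S, {v | (Fin.cons x v : Fin (t + 1) → S) ∈ P}.indicator (pathProb K x) v := by
  classical
  have hP : MeasurableSet P := P.to_countable.measurableSet
  rw [← Measure.map_apply (measurable_pathPrefix t) hP,
    ← Measure.tsum_indicator_apply_singleton _ _ hP, ← (Fin.consEquiv fun _ => S).tsum_eq,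
    ENNReal.tsum_prod', tsum_eq_single x]
  all_goals simp only [Fin.consEquiv, Equiv.coe_fn_mk, Set.indicator_apply,
    Measure.map_apply (measurable_pathPrefix t) (measurableSet_singleton _),
    h.measure_pathPrefix_eq]
  · simp
  · intro z hz
    simp [hz]

lemma measurableSet_avoidUntil [MeasurableSingletonClass S] [Countable S] (A : Set S) (t : ℕ) :
    MeasurableSet (avoidUntil A t) := by
  rw [avoidUntil_eq_preimage_pathPrefix]
  exact measurable_pathPrefix t (Set.to_countable _).measurableSet

lemma IsMarkovChainLaw.measure_avoidUntil [MeasurableSingletonClass S] [Countable S]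
    (h : IsMarkovChainLaw K law) (A : Set S) (t : ℕ) (x : S) :
    law x (avoidUntil A t) = survivalProb K A t x := by
  rw [avoidUntil_eq_preimage_pathPrefix, h.measure_pathPrefix_preimage, ← tsum_indicator_pathProb]
  rfl

lemma IsMarkovChainLaw.lintegral_hitTime [MeasurableSingletonClass S] [Countable S]
    (h : IsMarkovChainLaw K law) (A : Set S) (x : S) :
    ∫⁻ ω, hitTime A ω ∂(law x) = meanHittingTime K A x := by
  simp_rw [hitTime_eq_tsum_indicator_avoidUntil A]
  rw [lintegral_tsum fun t =>
    (measurable_one.indicator (measurableSet_avoidUntil A t)).aemeasurable]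
  exact tsum_congr fun t => by
    rw [lintegral_indicator_one (measurableSet_avoidUntil A t), h.measure_avoidUntil]

end PathSpace

section BirthDeath

def bdKernel (p q : ℤ → ℝ) (x y : ℤ) : ℝ≥0∞ := ENNReal.ofReal (bdStep p q x y)

variable {p q : ℤ → ℝ}

lemma tsum_bdKernel_mul (x : ℤ) (g : ℤ → ℝ≥0∞) :
    ∑' y, bdKernel p q x y * g y = ENNReal.ofReal (p x) * g (x + 1)
      + ENNReal.ofReal (q x) * g (x - 1) + ENNReal.ofReal (1 - p x - q x) * g x := by
  have hsupp : ∀ y ∉ ({x + 1, x - 1, x} : Finset ℤ), bdKernel p q x y * g y = 0 := by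
    intro y hy
    simp only [Finset.mem_insert, Finset.mem_singleton, not_or] at hy
    simp [bdKernel, bdStep, hy.1, hy.2.1, hy.2.2]
  rw [tsum_eq_sum hsupp,
    Finset.sum_insert (by simp only [Finset.mem_insert, Finset.mem_singleton]; omega),
    Finset.sum_insert (by simp), Finset.sum_singleton, add_assoc]
  have h1 : x - 1 ≠ x + 1 := by omega
  have h2 : x ≠ x + 1 := by omega
  have h3 : x ≠ x - 1 := by omega
  simp [bdKernel, bdStep, h1, h2, h3]

lemma bdKernel_ne_zero {x y : ℤ} (h : bdKernel p q x y ≠ 0) :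
    (y = x + 1 ∧ 0 < p x) ∨ (y = x - 1 ∧ 0 < q x) ∨ y = x := by
  simp only [bdKernel, bdStep, ne_eq, ENNReal.ofReal_eq_zero, not_le] at h
  split_ifs at h with h1 h2 h3
  · exact .inl ⟨h1, h⟩
  · exact .inr (.inl ⟨h2, h⟩)
  · exact .inr (.inr h3)
  · exact absurd h (lt_irrefl 0)

lemma bdKernel_neg (x y : ℤ) :
    bdKernel p q (-x) (-y) = bdKernel (fun x => q (-x)) (fun x => p (-x)) x y := by
  simp only [bdKernel, bdStep]
  congr 1
  split_ifs <;> first | omega | ring_nf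

lemma meanHittingTime_bdKernel_neg (j x : ℤ) :
    meanHittingTime (bdKernel p q) {j} x
      = meanHittingTime (bdKernel (fun x => q (-x)) (fun x => p (-x))) {-j} (-x) := by
  have hpre : (Equiv.neg ℤ) ⁻¹' {j} = {-j} := by ext; simp
  have h := meanHittingTime_comp_equiv (K := bdKernel p q) (A := {j}) (Equiv.neg ℤ) (-x)
  rw [hpre] at h
  simpa only [Equiv.neg_apply, neg_neg, bdKernel_neg] using h.symm

lemma ofReal_eq_one_add_tsum_bdKernel {w : ℤ → ℝ} {x : ℤ} (hp : 0 ≤ p x) (hq : 0 ≤ q x)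
    (hr : p x + q x ≤ 1) (hw₁ : 0 ≤ w (x - 1)) (hw₂ : 0 ≤ w x) (hw₃ : 0 ≤ w (x + 1))
    (heq : p x * (w x - w (x + 1)) = 1 + q x * (w (x - 1) - w x)) :
    ENNReal.ofReal (w x) = 1 + ∑' y, bdKernel p q x y * ENNReal.ofReal (w y) := by
  have hr' : 0 ≤ 1 - p x - q x := by linarith
  rw [tsum_bdKernel_mul, ← ENNReal.ofReal_mul hp, ← ENNReal.ofReal_mul hq, ← ENNReal.ofReal_mul hr',
    ← ENNReal.ofReal_add (by positivity) (by positivity),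
    ← ENNReal.ofReal_add (by positivity) (by positivity), ← ENNReal.ofReal_one,
    ← ENNReal.ofReal_add zero_le_one (by positivity)]
  congr 1
  linear_combination heq

end BirthDeath

section BirthDeathFormula

variable {p q π : ℤ → ℝ}

/-- Mean time for a birth-and-death chain on `⟦b, ∞⟦` to climb from `k` to `k + 1`: the
stationary mass `π ⟦b, k⟧` below the edge divided by the flow `π k * p k` across it. -/
def stepUpTime (π p : ℤ → ℝ) (b k : ℤ) : ℝ := (∑ i ∈ Finset.Icc b k, π i) / (π k * p k)

def stepDownTime (π q : ℤ → ℝ) (a k : ℤ) : ℝ := (∑ i ∈ Finset.Icc k a, π i) / (π k * q k)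

lemma stepUpTime_pred_self (b : ℤ) : stepUpTime π p b (b - 1) = 0 := by
  simp [stepUpTime]

lemma stepUpTime_nonneg {b k : ℤ} (hπ : ∀ i, b ≤ i → i ≤ k → 0 ≤ π i) (hp : b ≤ k → 0 ≤ p k) :
    0 ≤ stepUpTime π p b k := by
  rcases lt_or_ge k b with hkb | hbk
  · simp [stepUpTime, Finset.Icc_eq_empty_of_lt hkb]
  refine div_nonneg (Finset.sum_nonneg fun i hi => ?_) (mul_nonneg (hπ k hbk le_rfl) (hp hbk))
  rw [Finset.mem_Icc] at hi
  exact hπ i hi.1 hi.2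

lemma stepUpTime_neg (a k : ℤ) :
    stepUpTime (fun x => π (-x)) (fun x => q (-x)) (-a) (-k) = stepDownTime π q a k := by
  simp only [stepUpTime, stepDownTime, neg_neg]
  congr 1
  exact Finset.sum_nbij' (fun i => -i) (fun i => -i)
    (fun i hi => by rw [Finset.mem_Icc] at hi ⊢; omega)
    (fun i hi => by rw [Finset.mem_Icc] at hi ⊢; omega)
    (by simp) (by simp) (by simp)

lemma mul_stepUpTime {b n : ℤ} (hp : ∀ x, b ≤ x → x < n → 0 < p x)
    (hπ : ∀ x, b ≤ x → x < n → 0 < π x) (hqb : q b = 0)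
    (hdb : ∀ x, b < x → x < n → π x * q x = π (x - 1) * p (x - 1))
    {x : ℤ} (hbx : b ≤ x) (hxn : x < n) :
    p x * stepUpTime π p b x = 1 + q x * stepUpTime π p b (x - 1) := by
  have hπx := hπ x hbx hxn
  have hpx := hp x hbx hxn
  have hmass : ∑ i ∈ Finset.Icc b x, π i = ∑ i ∈ Finset.Icc b (x - 1), π i + π x := by
    rw [← Finset.insert_Icc_sub_one_right_eq_Icc hbx, Finset.sum_insert (by simp), add_comm]
  have hdown : q x * stepUpTime π p b (x - 1) = (∑ i ∈ Finset.Icc b (x - 1), π i) / π x := by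
    obtain rfl | hbx := eq_or_lt_of_le hbx
    · simp [hqb, stepUpTime_pred_self]
    have hdbx := hdb x hbx hxn
    have hflow : π x * q x ≠ 0 :=
      hdbx ▸ (mul_pos (hπ _ (by omega) (by omega)) (hp _ (by omega) (by omega))).ne'
    rw [stepUpTime, ← hdbx]
    field_simp [right_ne_zero_of_mul hflow]
  rw [hdown, stepUpTime, hmass]
  field_simp
  ring

lemma mem_Icc_of_bdKernel_ne_zero {b n : ℤ} (hqb : q b = 0) {x y : ℤ} (hx : x ∈ Set.Icc b n)
    (hxn : x ∉ ({n} : Set ℤ)) (hy : bdKernel p q x y ≠ 0) : y ∈ Set.Icc b n := by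
  simp only [Set.mem_Icc, Set.mem_singleton_iff] at hx hxn ⊢
  rcases bdKernel_ne_zero hy with ⟨rfl, -⟩ | ⟨rfl, hqx⟩ | rfl
  · omega
  · have : x ≠ b := by rintro rfl; exact hqx.ne' hqb
    omega
  · omega

theorem meanHittingTime_bdKernel {b n : ℤ} (hp : ∀ x, b ≤ x → x < n → 0 < p x)
    (hq : ∀ x, b ≤ x → x < n → 0 ≤ q x) (hr : ∀ x, b ≤ x → x < n → p x + q x ≤ 1)
    (hπ : ∀ x, b ≤ x → x < n → 0 < π x) (hqb : q b = 0)
    (hdb : ∀ x, b < x → x < n → π x * q x = π (x - 1) * p (x - 1))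
    {x : ℤ} (hbx : b ≤ x) (hxn : x ≤ n) :
    meanHittingTime (bdKernel p q) {n} x
      = ENNReal.ofReal (∑ k ∈ Finset.Ico x n, stepUpTime π p b k) := by
  set w : ℤ → ℝ := fun x => ∑ k ∈ Finset.Ico x n, stepUpTime π p b k
  have hw_succ : ∀ y, y < n → w y = stepUpTime π p b y + w (y + 1) := fun y hy => by
    simp only [w]
    rw [← Finset.insert_Ico_add_one_left_eq_Ico hy, Finset.sum_insert (by simp)]
  have hw_nonneg : ∀ y, 0 ≤ w y := fun y => Finset.sum_nonneg fun k hk => by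
    rw [Finset.mem_Ico] at hk
    exact stepUpTime_nonneg (fun i hbi hik => (hπ i hbi (by omega)).le)
      fun hbk => (hp k hbk hk.2).le
  obtain ⟨M, hM⟩ := ((Set.finite_Icc b n).image w).bddAbove
  refine meanHittingTime_eq_of_bounded_solution (I := Set.Icc b n)
    (v := fun y => ENNReal.ofReal (w y)) (M := ENNReal.ofReal M)
    (fun y hy hyn z hz => mem_Icc_of_bdKernel_ne_zero hqb hy hyn hz) ENNReal.ofReal_ne_top
    (fun y hy => ENNReal.ofReal_le_ofReal (hM ⟨y, hy, rfl⟩)) ?_ ?_ x ⟨hbx, hxn⟩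
  · rintro y - rfl
    simp [w]
  · rintro y ⟨hby, hyn⟩ hy
    have hyn : y < n := lt_of_le_of_ne hyn hy
    refine ofReal_eq_one_add_tsum_bdKernel (hp y hby hyn).le (hq y hby hyn) (hr y hby hyn)
      (hw_nonneg _) (hw_nonneg _) (hw_nonneg _) ?_
    rw [hw_succ (y - 1) (by omega), sub_add_cancel, hw_succ y hyn]
    linear_combination mul_stepUpTime hp hπ hqb hdb hby hyn

end BirthDeathFormula

namespace BDChain

variable {b a : ℤ} (c : BDChain b a)

lemma p_nonneg (x : ℤ) : 0 ≤ c.p x := by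
  by_cases h : b ≤ x ∧ x ≤ a - 1
  · exact (c.p_pos x h.1 h.2).le
  · rw [c.p_zero x (by omega)]

lemma q_nonneg (x : ℤ) : 0 ≤ c.q x := by
  by_cases h : b + 1 ≤ x ∧ x ≤ a
  · exact (c.q_pos x h.1 h.2).le
  · rw [c.q_zero x (by omega)]

lemma isMarkovChainLaw : IsMarkovChainLaw (bdKernel c.p c.q) c.law := by
  intro x u n
  induction n with
  | zero =>
    have := c.prob x
    have hset : {ω : ℕ → ℤ | ∀ i ≤ 0, ω i = u i} = {ω | ω 0 = u 0} := by
      ext ω; simp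
    rw [hset, Finset.prod_range_zero, mul_one]
    split_ifs with hx
    · rw [hx, c.init x]
    · have hsub : {ω : ℕ → ℤ | ω 0 = u 0} ⊆ {ω | ω 0 = x}ᶜ := fun ω hω h0 => hx (hω ▸ h0)
      refine measure_mono_null hsub ?_
      rw [prob_compl_eq_zero_iff (measurableSet_eq_fun (measurable_pi_apply 0) measurable_const)]
      exact c.init x
  | succ n ih => rw [c.markov, ih, Finset.prod_range_succ, mul_assoc, bdKernel]

lemma eT_eq_meanHittingTime (x y : ℤ) : c.eT x y = meanHittingTime (bdKernel c.p c.q) {y} x :=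
  c.isMarkovChainLaw.lintegral_hitTime {y} x

variable {c} {π : ℤ → ℝ}

lemma IsStationary.nonneg (hπ : c.IsStationary π) (x : ℤ) : 0 ≤ π x := by
  by_cases h : b ≤ x ∧ x ≤ a
  · exact (hπ.1 x h.1 h.2).le
  · rw [hπ.2.1 x (by omega)]

lemma eT_up (hπ : c.IsStationary π) {j n : ℤ} (hj : b ≤ j) (hjn : j ≤ n) (hn : n ≤ a) :
    c.eT j n = ENNReal.ofReal (∑ k ∈ Finset.Ico j n, stepUpTime π c.p b k) := by
  obtain ⟨hπpos, -, -, hdb⟩ := hπ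
  rw [eT_eq_meanHittingTime]
  exact meanHittingTime_bdKernel (fun x hbx hxn => c.p_pos x hbx (by omega))
    (fun x _ _ => c.q_nonneg x) (fun x hbx hxn => c.r_nonneg x hbx (by omega))
    (fun x hbx hxn => hπpos x hbx (by omega)) (c.q_zero b (.inl le_rfl))
    (fun x hbx hxn => hdb x hbx (by omega)) hj hjn

lemma eT_down (hπ : c.IsStationary π) {j n : ℤ} (hj : b ≤ j) (hjn : j ≤ n) (hn : n ≤ a) :
    c.eT n j = ENNReal.ofReal (∑ k ∈ Finset.Ioc j n, stepDownTime π c.q a k) := by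
  obtain ⟨hπpos, -, -, hdb⟩ := hπ
  have hdb' : ∀ x, -a < x → x < -j → π (-x) * c.p (-x) = π (-(x - 1)) * c.q (-(x - 1)) := by
    intro x hax hxj
    have h := hdb (1 - x) (by omega) (by omega)
    rw [show 1 - x - 1 = -x by ring, show 1 - x = -(x - 1) by ring] at h
    exact h.symm
  rw [eT_eq_meanHittingTime, meanHittingTime_bdKernel_neg,
    meanHittingTime_bdKernel (b := -a) (π := fun x => π (-x))
      (fun x hax hxj => c.q_pos (-x) (by omega) (by omega)) (fun x _ _ => c.p_nonneg (-x))
      (fun x hax hxj => by linarith [c.r_nonneg (-x) (by omega) (by omega)])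
      (fun x hax hxj => hπpos (-x) (by omega) (by omega))
      (by simpa using c.p_zero a (.inr le_rfl)) hdb' (by omega) (by omega)]
  congr 1
  exact Finset.sum_nbij' (fun k => -k) (fun k => -k)
    (fun k hk => by rw [Finset.mem_Ico] at hk; rw [Finset.mem_Ioc]; omega)
    (fun k hk => by rw [Finset.mem_Ioc] at hk; rw [Finset.mem_Ico]; omega)
    (by simp) (by simp) fun k _ => by rw [← stepUpTime_neg, neg_neg]

end BDChain

section CommuteTime

variable {p q π : ℤ → ℝ}

lemma stepDownTime_nonneg (hπ : ∀ i, 0 ≤ π i) {a k : ℤ} (hqk : 0 ≤ q k) :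
    0 ≤ stepDownTime π q a k :=
  div_nonneg (Finset.sum_nonneg fun i _ => hπ i) (mul_nonneg (hπ k) hqk)

lemma stepUpTime_pred_add_stepDownTime {b a k : ℤ} (hbk : b ≤ k) (hka : k ≤ a)
    (hmass : ∑ i ∈ Finset.Icc b a, π i = 1) (hdb : π k * q k = π (k - 1) * p (k - 1)) :
    stepUpTime π p b (k - 1) + stepDownTime π q a k = 1 / (q k * π k) := by
  have hsplit : ∑ i ∈ Finset.Icc b (k - 1), π i + ∑ i ∈ Finset.Icc k a, π i = 1 := by
    have hdisj : Disjoint (Finset.Icc b (k - 1)) (Finset.Icc k a) :=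
      Finset.disjoint_left.2 fun i hi hi' => by rw [Finset.mem_Icc] at hi hi'; omega
    rw [← Finset.sum_union hdisj, ← hmass]
    congr 1
    ext i
    simp only [Finset.mem_union, Finset.mem_Icc]
    omega
  rw [stepUpTime, stepDownTime, ← hdb, ← add_div, hsplit, mul_comm]

lemma sum_Ico_eq_sum_Ioc_sub_one (f : ℤ → ℝ) (j n : ℤ) :
    ∑ k ∈ Finset.Ico j n, f k = ∑ k ∈ Finset.Ioc j n, f (k - 1) :=
  Finset.sum_nbij' (· + 1) (· - 1) (by simp) (by simp) (by simp) (by simp) (by simp)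

end CommuteTime

theorem commute_time_identity_general {b a : ℤ} (c : BDChain b a)
    (π : ℤ → ℝ) (hπ : c.IsStationary π)
    (j n : ℤ) (hj : b ≤ j) (hjn : j < n) (hn : n ≤ a) :
    c.eT j n + c.eT n j = ENNReal.ofReal
      (∑ k ∈ Finset.Icc (j + 1) n, 1 / (c.q k * π k)) := by
  rw [c.eT_up hπ hj hjn.le hn, c.eT_down hπ hj hjn.le hn,
    ← ENNReal.ofReal_add (Finset.sum_nonneg fun k _ =>
        stepUpTime_nonneg (fun i _ _ => hπ.nonneg i) fun _ => c.p_nonneg k)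
      (Finset.sum_nonneg fun k _ => stepDownTime_nonneg hπ.nonneg (c.q_nonneg k)),
    sum_Ico_eq_sum_Ioc_sub_one, ← Finset.sum_add_distrib, Finset.Icc_add_one_left_eq_Ioc]
  congr 1
  refine Finset.sum_congr rfl fun k hk => ?_
  rw [Finset.mem_Ioc] at hk
  exact stepUpTime_pred_add_stepDownTime (by omega) (by omega) hπ.2.2.1
    (hπ.2.2.2 k (by omega) (by omega))

/-- For an irreducible birth-and-death chain on `⟦b,a⟧` with
reversible invariant probability measure `π`, for all `b ≤ j < n ≤ a`:
`E[T_{j→n}] + E[T_{n→j}] = Σ_{k=j+1}^{n} 1 / (q_k π(k))`. -/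
theorem commute_time_identity {b a : ℤ} (hab : b < a) (c : BDChain b a)
    (π : ℤ → ℝ) (hπ : c.IsStationary π)
    (j n : ℤ) (hj : b ≤ j) (hjn : j < n) (hn : n ≤ a) :
    c.eT j n + c.eT n j = ENNReal.ofReal
      (∑ k ∈ Finset.Icc (j + 1) n, 1 / (c.q k * π k)) :=
  commute_time_identity_general c π hπ j n hj hjn hn
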